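/- A complex d×d matrix A satisfying Re⟨Aξ,ξ⟩ ≥ λ|ξ|² for some λ > 0 and all ξ ∈ ℂ^d has Δ_p(A) ≥ 0 for all p > 1 if and only if A has real entries. -/

import Mathlib

open scoped ComplexConjugate

noncomputable def Ip (p : ℝ) {d : ℕ} (ξ : EuclideanSpace ℂ (Fin d)) : EuclideanSpace ℂ (Fin d) :=
  WithLp.toLp 2 (fun i => ξ i + ((1 - 2 / p : ℝ) : ℂ) * conj (ξ i))

noncomputable def mulVecE {d : ℕ} (A : Matrix (Fin d) (Fin d) ℂ)
    (ξ : EuclideanSpace ℂ (Fin d)) : EuclideanSpace ℂ (Fin d) :=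
  WithLp.toLp 2 (fun i => ∑ j, A i j * ξ j)

noncomputable def Delta (p : ℝ) {d : ℕ} (A : Matrix (Fin d) (Fin d) ℂ) : ℝ :=
  sInf { r : ℝ | ∃ ξ : EuclideanSpace ℂ (Fin d), ‖ξ‖ = 1 ∧
    r = (@inner ℂ _ _ (mulVecE A ξ) (Ip p ξ)).re }

/-!
Writing `ξ = x + i y`, `Re⟨Aξ, I_p ξ⟩ = (2 - 2/p) ∑ Re (Aξ)ᵢ xᵢ + (2/p) ∑ Im (Aξ)ᵢ yᵢ`.
If `A` is real, the two sums are `⟨A x, x⟩` and `⟨A y, y⟩`, nonnegative by ellipticity.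
Conversely, `Δ_p(A) ≥ 0` makes the form nonnegative on all of `ℂ^d` by homogeneity, and
letting `p → 1` leaves `∑ Im (Aξ)ᵢ yᵢ ≥ 0`. At `ξ = t eⱼ + i eᵢ` this sum is the affine function
`Re Aᵢᵢ + t Im Aᵢⱼ` of `t`, so `Im Aᵢⱼ = 0`.
-/

section

variable {d : ℕ} (A : Matrix (Fin d) (Fin d) ℂ)

noncomputable def pForm (p : ℝ) (ξ : EuclideanSpace ℂ (Fin d)) : ℝ :=
  (inner ℂ (mulVecE A ξ) (Ip p ξ)).re

noncomputable def rePairing (ξ : EuclideanSpace ℂ (Fin d)) : ℝ :=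
  ∑ i, (mulVecE A ξ i).re * (ξ i).re

noncomputable def imPairing (ξ : EuclideanSpace ℂ (Fin d)) : ℝ :=
  ∑ i, (mulVecE A ξ i).im * (ξ i).im

theorem pForm_eq (p : ℝ) (ξ : EuclideanSpace ℂ (Fin d)) :
    pForm A p ξ = (2 - 2 / p) * rePairing A ξ + 2 / p * imPairing A ξ := by
  simp only [pForm, rePairing, imPairing, PiLp.inner_apply, RCLike.inner_apply, Ip,
    Complex.re_sum, Finset.mul_sum, ← Finset.sum_add_distrib]
  refine Finset.sum_congr rfl fun i _ => ?_
  simp only [Complex.mul_re, Complex.add_re, Complex.add_im, Complex.mul_im, Complex.conj_re,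
    Complex.conj_im, Complex.ofReal_re, Complex.ofReal_im]
  ring

theorem rePairing_eq_imPairing_I_smul (ξ : EuclideanSpace ℂ (Fin d)) :
    rePairing A ξ = imPairing A (Complex.I • ξ) := by
  simp [rePairing, imPairing, mulVecE, mul_left_comm _ Complex.I]

theorem mulVecE_smul (r : ℝ) (ξ : EuclideanSpace ℂ (Fin d)) :
    mulVecE A (r • ξ) = r • mulVecE A ξ := by
  ext i
  simp [mulVecE, Finset.smul_sum, mul_left_comm]

theorem Ip_smul (p r : ℝ) (ξ : EuclideanSpace ℂ (Fin d)) : Ip p (r • ξ) = r • Ip p ξ := by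
  ext i
  simp [Ip, Complex.real_smul]
  ring

theorem pForm_smul (p r : ℝ) (ξ : EuclideanSpace ℂ (Fin d)) :
    pForm A p (r • ξ) = r ^ 2 * pForm A p ξ := by
  rw [pForm, pForm, mulVecE_smul, Ip_smul, RCLike.real_smul_eq_coe_smul (K := ℂ),
    RCLike.real_smul_eq_coe_smul (K := ℂ), inner_smul_left, inner_smul_right]
  simp [sq, ← mul_assoc]

theorem continuous_pForm (p : ℝ) : Continuous (pForm A p) := by
  unfold pForm mulVecE Ip
  fun_prop

theorem Delta_eq_sInf_image_sphere (p : ℝ) : Delta p A = sInf (pForm A p '' Metric.sphere 0 1) := by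
  rw [Delta]
  congr 1
  ext r
  simp [pForm, eq_comm]

theorem zero_le_Delta_iff (p : ℝ) :
    0 ≤ Delta p A ↔ ∀ ξ, 0 ≤ pForm A p ξ := by
  rw [Delta_eq_sInf_image_sphere]
  refine ⟨fun h ξ => ?_, fun h => Real.sInf_nonneg ?_⟩
  · rcases eq_or_ne ξ 0 with rfl | hξ
    · simpa using (pForm_smul A p 0 0).ge
    have hbdd : BddBelow (pForm A p '' Metric.sphere 0 1) :=
      (isCompact_sphere 0 1).bddBelow_image (continuous_pForm A p).continuousOn
    have hunit : ‖‖ξ‖⁻¹ • ξ‖ = 1 := norm_smul_inv_norm hξ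
    have : 0 ≤ pForm A p (‖ξ‖⁻¹ • ξ) :=
      h.trans (csInf_le hbdd ⟨_, by simpa using hunit, rfl⟩)
    rw [pForm_smul] at this
    exact nonneg_of_mul_nonneg_right this (by positivity)
  · rintro r ⟨ξ, -, rfl⟩
    exact h ξ

theorem imPairing_nonneg_of_forall_pForm_nonneg (h : ∀ p : ℝ, 1 < p → ∀ ξ, 0 ≤ pForm A p ξ)
    (ξ : EuclideanSpace ℂ (Fin d)) : 0 ≤ imPairing A ξ := by
  have hlim : Filter.Tendsto (fun p : ℝ => (2 - 2 / p) * rePairing A ξ + 2 / p * imPairing A ξ)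
      (nhdsWithin 1 (Set.Ioi 1)) (nhds ((2 - 2 / 1) * rePairing A ξ + 2 / 1 * imPairing A ξ)) :=
    tendsto_nhdsWithin_of_tendsto_nhds <| ContinuousAt.tendsto <| by fun_prop (disch := norm_num)
  have := ge_of_tendsto hlim <| eventually_nhdsWithin_of_forall fun p hp => by
    simpa only [pForm_eq] using h p hp ξ
  linarith

theorem imPairing_single_add_single (i j : Fin d) (t : ℝ) :
    imPairing A (EuclideanSpace.single j (t : ℂ) + EuclideanSpace.single i Complex.I) =
      (A i i).re + (A i j).im * t := by
  simp [imPairing, mulVecE, Complex.mul_im, apply_ite Complex.im, apply_ite Complex.re, mul_ite,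
    Finset.sum_add_distrib]

theorem im_eq_zero_of_imPairing_nonneg (h : ∀ ξ, 0 ≤ imPairing A ξ) (i j : Fin d) :
    (A i j).im = 0 := by
  by_contra hne
  have := h (EuclideanSpace.single j ((-((A i i).re + 1) / (A i j).im : ℝ) : ℂ) +
    EuclideanSpace.single i Complex.I)
  rw [imPairing_single_add_single] at this
  field_simp at this
  linarith

theorem imPairing_eq_re_inner_of_im_eq_zero (hA : ∀ i j, (A i j).im = 0)
    (ξ : EuclideanSpace ℂ (Fin d)) :
    imPairing A ξ = (inner ℂ (mulVecE A (WithLp.toLp 2 fun k => ((ξ k).im : ℂ)))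
      (WithLp.toLp 2 fun k => ((ξ k).im : ℂ))).re := by
  simp [imPairing, mulVecE, PiLp.inner_apply, Complex.mul_im, Complex.mul_re, hA, mul_comm]

theorem pForm_nonneg_of_im_eq_zero (hA : ∀ i j, (A i j).im = 0)
    (hacc : ∀ ξ, 0 ≤ (inner ℂ (mulVecE A ξ) ξ).re) {p : ℝ} (hp : 1 ≤ p)
    (ξ : EuclideanSpace ℂ (Fin d)) : 0 ≤ pForm A p ξ := by
  have him : ∀ η, 0 ≤ imPairing A η := fun η => by
    simpa only [imPairing_eq_re_inner_of_im_eq_zero A hA] using hacc _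
  have hp' : 2 / p ≤ 2 := div_le_self zero_le_two hp
  rw [pForm_eq, rePairing_eq_imPairing_I_smul]
  exact add_nonneg (mul_nonneg (by linarith) (him _)) (mul_nonneg (by positivity) (him _))

end

theorem stmt4_general {d : ℕ} (A : Matrix (Fin d) (Fin d) ℂ) (lam : ℝ) (hlam : 0 < lam)
    (hell : ∀ ξ : EuclideanSpace ℂ (Fin d),
      lam * ‖ξ‖ ^ 2 ≤ (@inner ℂ _ _ (mulVecE A ξ) ξ).re) :
    (∀ p : ℝ, 1 < p → 0 ≤ Delta p A) ↔ ∀ i j, (A i j).im = 0 := by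
  simp only [zero_le_Delta_iff]
  constructor
  · intro h
    exact im_eq_zero_of_imPairing_nonneg A (imPairing_nonneg_of_forall_pForm_nonneg A h)
  · intro hA p hp
    have hacc : ∀ ξ, 0 ≤ (inner ℂ (mulVecE A ξ) ξ).re := fun ξ =>
      (by positivity : 0 ≤ lam * ‖ξ‖ ^ 2).trans (hell ξ)
    exact pForm_nonneg_of_im_eq_zero A hA hacc hp.le

/-- an elliptic matrix has `Δ_p(A) ≥ 0` for all `p > 1` iff it is real. -/
theorem stmt4 {d : ℕ} (hd : 0 < d) (A : Matrix (Fin d) (Fin d) ℂ) (lam : ℝ) (hlam : 0 < lam)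
    (hell : ∀ ξ : EuclideanSpace ℂ (Fin d),
      lam * ‖ξ‖ ^ 2 ≤ (@inner ℂ _ _ (mulVecE A ξ) ξ).re) :
    (∀ p : ℝ, 1 < p → 0 ≤ Delta p A) ↔ ∀ i j, (A i j).im = 0 :=
  stmt4_general A lam hlam hell
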